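/- For two sequences A and B over a linearly ordered alphabet with positive weight function w, LCWIS(Â,B̂) ≤ WLCWIS(A,B), where Â and B̂ are obtained by replacing every symbol a by w(a) consecutive copies of a. Hence WLCWIS(A,B) = LCWIS(Â,B̂). -/

import Mathlib

open List

/-- `C` is a common weakly increasing subsequence of `A` and `B`. -/
def CWIS {σ : Type*} [LinearOrder σ] (A B C : List σ) : Prop :=
  C.Chain' (· ≤ ·) ∧ C.Sublist A ∧ C.Sublist B

/-- Length of a longest common weakly increasing subsequence. -/
noncomputable def LCWIS {σ : Type*} [LinearOrder σ] (A B : List σ) : ℕ :=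
  sSup {n | ∃ C : List σ, CWIS A B C ∧ C.length = n}

/-- Maximum total weight of a common weakly increasing subsequence. -/
noncomputable def WLCWIS {σ : Type*} [LinearOrder σ] (w : σ → ℕ) (A B : List σ) : ℕ :=
  sSup {n | ∃ C : List σ, CWIS A B C ∧ (C.map w).sum = n}

/-- Blow-up: replace each symbol `a` by `w a` consecutive copies of `a`. -/
def blow {σ : Type*} (w : σ → ℕ) (X : List σ) : List σ :=
  X.flatMap fun a => List.replicate (w a) a

/-!
Blowing up a common weakly increasing subsequence of `A` and `B` gives one of `blow w A` and
`blow w B` whose length is its weight. Conversely, a sublist `D` of `blow w A` contracts to a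
sublist `C_A` of `A` with `D` a sublist of `blow w C_A`, and likewise for `B`. When `D` is weakly
increasing so are `C_A` and `C_B`, and their multiset intersection `C` is a sorted list whose
multiplicities are at most those of the sorted lists `C_A` and `C_B`; hence it is a common
subsequence of `A` and `B`. As `D ≤ blow w C_A` and `D ≤ blow w C_B` as multisets,
`D ≤ blow w C`, so `|D| ≤ |blow w C|`, the weight of `C`.
-/

section blow

variable {σ : Type*} (w : σ → ℕ)

@[simp]
lemma blow_nil : blow w [] = [] := rfl

@[simp]
lemma blow_cons (a : σ) (X : List σ) : blow w (a :: X) = replicate (w a) a ++ blow w X := rfl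

lemma length_blow (X : List σ) : (blow w X).length = (X.map w).sum := by
  induction X with
  | nil => rfl
  | cons a X ih => simp [ih]

lemma count_blow [DecidableEq σ] (b : σ) (X : List σ) :
    count b (blow w X) = w b * count b X := by
  induction X with
  | nil => simp
  | cons a X ih =>
    by_cases hab : a = b
    · subst hab; simp [ih, Nat.mul_add, add_comm]
    · simp [ih, count_replicate, hab]

variable {w}

lemma List.Sublist.blow {X Y : List σ} (h : X <+ Y) : blow w X <+ blow w Y := h.flatMap _

lemma List.IsChain.blow [Preorder σ] {X : List σ} (h : X.IsChain (· ≤ ·)) :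
    (blow w X).IsChain (· ≤ ·) := by
  rw [isChain_iff_pairwise] at h ⊢
  refine pairwise_flatMap.2 ⟨fun a _ => pairwise_replicate.2 (Or.inr le_rfl), h.imp ?_⟩
  rintro a b hab x hx y hy
  rw [eq_of_mem_replicate hx, eq_of_mem_replicate hy]
  exact hab

lemma exists_sublist_of_sublist_blow {D X : List σ} (hD : D <+ blow w X) :
    ∃ C, C <+ X ∧ C <+ D ∧ D <+ blow w C := by
  induction X generalizing D with
  | nil => exact ⟨[], by simp_all⟩
  | cons a X ih =>
    obtain ⟨D₁, D₂, rfl, h₁, h₂⟩ := sublist_append_iff.1 hD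
    obtain ⟨m, -, rfl⟩ := sublist_replicate_iff.1 h₁
    obtain ⟨C, hCX, hCD, hDC⟩ := ih h₂
    cases m with
    | zero => exact ⟨C, hCX.cons a, by simpa using hCD, by simpa using hDC⟩
    | succ m =>
      exact ⟨a :: C, hCX.cons_cons a, (hCD.trans (sublist_append_right _ _)).cons_cons a,
        h₁.append hDC⟩

end blow

lemma List.sublist_of_subperm_of_isChain {σ : Type*} [PartialOrder σ] {X Y : List σ}
    (hXY : X <+~ Y) (hX : X.IsChain (· ≤ ·)) (hY : Y.IsChain (· ≤ ·)) : X <+ Y :=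
  sublist_of_subperm_of_pairwise hXY (isChain_iff_pairwise.1 hX) (isChain_iff_pairwise.1 hY)

section bagInter

variable {σ : Type*} [DecidableEq σ]

lemma List.bagInter_subperm_right (X Y : List σ) : X.bagInter Y <+~ Y :=
  subperm_ext_iff.2 fun b _ => by simp

lemma subperm_blow_bagInter {w : σ → ℕ} {D X Y : List σ} (hX : D <+~ blow w X)
    (hY : D <+~ blow w Y) : D <+~ blow w (X.bagInter Y) := by
  refine subperm_ext_iff.2 fun b _ => ?_
  rw [count_blow, count_bagInter, ← Nat.mul_min_mul_left]
  exact le_min (count_blow w b X ▸ hX.count_le b) (count_blow w b Y ▸ hY.count_le b)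

end bagInter

namespace CWIS

variable {σ : Type*} [LinearOrder σ] {A B C D : List σ}

lemma nil (A B : List σ) : CWIS A B [] := ⟨isChain_nil, nil_sublist A, nil_sublist B⟩

lemma length_le (h : CWIS A B C) : C.length ≤ A.length := h.2.1.length_le

lemma sum_map_le (w : σ → ℕ) (h : CWIS A B C) : (C.map w).sum ≤ (A.map w).sum :=
  (h.2.1.map w).sum_le_sum fun _ _ => Nat.zero_le _

lemma blow (w : σ → ℕ) (h : CWIS A B C) :
    CWIS (_root_.blow w A) (_root_.blow w B) (_root_.blow w C) :=
  ⟨IsChain.blow h.1, h.2.1.blow, h.2.2.blow⟩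

lemma exists_length_le_sum_map {w : σ → ℕ} (h : CWIS (_root_.blow w A) (_root_.blow w B) D) :
    ∃ C, CWIS A B C ∧ D.length ≤ (C.map w).sum := by
  obtain ⟨hD, hDA, hDB⟩ := h
  obtain ⟨CA, hCA, hCAD, hDCA⟩ := exists_sublist_of_sublist_blow hDA
  obtain ⟨CB, hCB, hCBD, hDCB⟩ := exists_sublist_of_sublist_blow hDB
  have hC : (CA.bagInter CB).IsChain (· ≤ ·) := hD.sublist (bagInter_sublist_left.trans hCAD)
  have hCCB : CA.bagInter CB <+ CB :=
    sublist_of_subperm_of_isChain (bagInter_subperm_right CA CB) hC (hD.sublist hCBD)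
  refine ⟨CA.bagInter CB, ⟨hC, bagInter_sublist_left.trans hCA, hCCB.trans hCB⟩, ?_⟩
  rw [← length_blow]
  exact (subperm_blow_bagInter hDCA.subperm hDCB.subperm).length_le

end CWIS

section optimum

variable {σ : Type*} [LinearOrder σ] {A B C : List σ} {n : ℕ}

lemma le_LCWIS (h : CWIS A B C) : C.length ≤ LCWIS A B :=
  le_csSup ⟨A.length, by rintro _ ⟨C, hC, rfl⟩; exact hC.length_le⟩ ⟨C, h, rfl⟩

lemma LCWIS_le (h : ∀ C, CWIS A B C → C.length ≤ n) : LCWIS A B ≤ n :=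
  csSup_le ⟨0, [], CWIS.nil A B, rfl⟩ (by rintro _ ⟨C, hC, rfl⟩; exact h C hC)

lemma le_WLCWIS (w : σ → ℕ) (h : CWIS A B C) : (C.map w).sum ≤ WLCWIS w A B :=
  le_csSup ⟨(A.map w).sum, by rintro _ ⟨C, hC, rfl⟩; exact hC.sum_map_le w⟩ ⟨C, h, rfl⟩

lemma WLCWIS_le (w : σ → ℕ) (h : ∀ C, CWIS A B C → (C.map w).sum ≤ n) : WLCWIS w A B ≤ n :=
  csSup_le ⟨0, [], CWIS.nil A B, rfl⟩ (by rintro _ ⟨C, hC, rfl⟩; exact h C hC)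

end optimum

theorem lcwis_blow_le_wlcwis_general {σ : Type*} [LinearOrder σ] (w : σ → ℕ)
    (A B : List σ) :
    LCWIS (blow w A) (blow w B) ≤ WLCWIS w A B ∧
    WLCWIS w A B = LCWIS (blow w A) (blow w B) := by
  have hle : LCWIS (blow w A) (blow w B) ≤ WLCWIS w A B := LCWIS_le fun D hD => by
    obtain ⟨C, hC, hDC⟩ := hD.exists_length_le_sum_map
    exact hDC.trans (le_WLCWIS w hC)
  have hge : WLCWIS w A B ≤ LCWIS (blow w A) (blow w B) := WLCWIS_le w fun C hC =>
    length_blow w C ▸ le_LCWIS (hC.blow w)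
  exact ⟨hle, hge.antisymm hle⟩

theorem lcwis_blow_le_wlcwis {σ : Type*} [LinearOrder σ] (w : σ → ℕ) (hw : ∀ a, 0 < w a)
    (A B : List σ) :
    LCWIS (blow w A) (blow w B) ≤ WLCWIS w A B ∧
    WLCWIS w A B = LCWIS (blow w A) (blow w B) :=
  lcwis_blow_le_wlcwis_general w A B
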